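/- Let κ be a measurable cardinal and let δ ≤ λ be ordinals with κ = cf(δ) ≤ δ < λ. Then the linear order δ (as an initial segment, hence suborder, of the linear order λ) is nicely embedded in λ. (The order-theoretic step of Theorem 2.8.) -/

import Mathlib

open Filter Cardinal

universe u

/-- `I` is nicely embedded in `J` (along the inclusion `e : I ↪o J`): there are a nonempty
set `S` and an ultrafilter `D` on `S` together with an order embedding of `J` into the
ultrapower `I^S/D` whose restriction to `I` is the canonical diagonal embedding. -/
def NicelyEmbedded {I : Type u} {J : Type u} [LinearOrder I] [LinearOrder J]
    (e : I ↪o J) : Prop :=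
  ∃ (S : Type u) (_ : Nonempty S) (D : Ultrafilter S)
    (g : J ↪o Filter.Germ (D : Filter S) I),
    ∀ t : I, g (e t) = (↑t : Filter.Germ (D : Filter S) I)

/-- `κ` is a measurable cardinal: it is uncountable and carries a `κ`-complete
nonprincipal ultrafilter on `κ`. -/
def IsMeasurableCardinal (κ : Cardinal.{u}) : Prop :=
  ℵ₀ < κ ∧ ∃ D : Ultrafilter κ.ord.ToType,
    (∀ x, D ≠ pure x) ∧ CardinalInterFilter (D : Filter κ.ord.ToType) κ

/-- The ordinal rank of an element of `o.ToType`. -/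
noncomputable def ordRank {o : Ordinal.{u}} (x : o.ToType) : Ordinal.{u} :=
  @Ordinal.typein o.ToType (· < ·) isWellOrder_lt x

/-!
A suborder `I ⊆ J` is nicely embedded as soon as there is a family of maps `p_s : J → I`,
indexed by a directed set, that eventually fix each point of `I` and eventually preserve
each strict inequality of `J`: the germs of `s ↦ p_s x` along any ultrafilter refining
`atTop` then embed `J` into `I^S/D` over `I`. When `I` is an initial segment of `J` without
a maximum, such maps exist for the index set `Finset J × I`: take `p_{(X,t)}` to be the
identity on `I`, and on `J \ I` send the points of `X` order-preservingly into `I` above `t`.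
The ordinal `δ` is such an initial segment of `λ` because `cf δ = κ` is infinite, so `δ` is
a limit ordinal.
-/

open Function Set

section LinearOrder

variable {I J : Type u} [LinearOrder I] [LinearOrder J]

theorem nicelyEmbedded_of_eventually {S : Type u} {l : Filter S} [l.NeBot] (e : I ↪o J)
    (p : S → J → I) (hlt : ∀ x y, x < y → ∀ᶠ s in l, p s x < p s y)
    (hinv : ∀ a, ∀ᶠ s in l, p s (e a) = a) : NicelyEmbedded e := by
  let D := Ultrafilter.of l
  let g : J → Germ (D : Filter S) I := fun x => ((fun s => p s x : S → I) : Germ _ I)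
  have hg : StrictMono g := fun x y hxy => Germ.coe_lt.mpr (Ultrafilter.of_le l (hlt x y hxy))
  exact ⟨S, l.nonempty_of_neBot, D, OrderEmbedding.ofStrictMono g hg,
    fun a => Germ.coe_eq.mpr (Ultrafilter.of_le l (hinv a))⟩

theorem exists_leftInverse_strictMonoOn_compl_range [Nonempty I] [NoMaxOrder I] (e : I ↪o J)
    (X : Finset J) (t : I) :
    ∃ p : J → I, LeftInverse p e ∧ StrictMonoOn p (↑X \ range e) ∧
      ∀ x ∉ range e, t < p x := by
  classical
  obtain ⟨t', ht'⟩ := exists_gt t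
  obtain ⟨u, hu, hu0⟩ := Nat.exists_strictMono' t'
  refine ⟨fun x => if x ∈ range e then invFun e x else u {z ∈ X | z < x}.card, fun a => ?_,
    ?_, fun x hx => ?_⟩
  · simp [leftInverse_invFun e.injective a]
  · rintro x ⟨hxX, hx⟩ y ⟨-, hy⟩ hxy
    simp only [if_neg hx, if_neg hy]
    have hsub : {z ∈ X | z < x} ⊂ {z ∈ X | z < y} :=
      (Finset.ssubset_iff_of_subset <|
        Finset.monotone_filter_right X fun _ _ hz => hz.trans hxy).mpr
          ⟨x, Finset.mem_filter.mpr ⟨hxX, hxy⟩, by simp⟩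
    exact hu (Finset.card_lt_card hsub)
  · simp only [if_neg hx]
    exact ht'.trans_le (hu0 ▸ hu.monotone (Nat.zero_le _))

theorem nicelyEmbedded_of_isLowerSet_range [Nonempty I] [NoMaxOrder I] (e : I ↪o J)
    (he : IsLowerSet (range e)) : NicelyEmbedded e := by
  choose p hinv hmono hbound using
    fun s : Finset J × I => exists_leftInverse_strictMonoOn_compl_range e s.1 s.2
  refine nicelyEmbedded_of_eventually (l := atTop) e p (fun x y hxy => ?_)
    (fun a => .of_forall fun s => hinv s a)
  by_cases hy : y ∈ range e
  · obtain ⟨b, rfl⟩ := hy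
    obtain ⟨a, rfl⟩ := he hxy.le ⟨b, rfl⟩
    exact .of_forall fun s => by rw [hinv, hinv]; exact e.lt_iff_lt.mp hxy
  by_cases hx : x ∈ range e
  · obtain ⟨a, rfl⟩ := hx
    filter_upwards [eventually_ge_atTop (∅, a)] with s hs
    rw [hinv]
    exact hs.2.trans_lt (hbound s y hy)
  · filter_upwards [eventually_ge_atTop ({x, y}, Classical.arbitrary I)] with s hs
    exact hmono s ⟨hs.1 (by simp), hx⟩ ⟨hs.1 (by simp), hy⟩ hxy

end LinearOrder

section Ordinal

open Ordinal Order

variable {o δ : Ordinal.{u}}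

theorem ordRank_le_ordRank {x y : o.ToType} : ordRank x ≤ ordRank y ↔ x ≤ y :=
  ToType.mk.symm.le_iff_le

theorem ordRank_lt_ordRank {x y : o.ToType} : ordRank x < ordRank y ↔ x < y :=
  ToType.mk.symm.lt_iff_lt

theorem ordRank_toTypeMk (a : Iio o) : ordRank (ToType.mk a) = a :=
  congrArg Subtype.val (ToType.mk.symm_apply_apply a)

theorem isLowerSet_setOf_ordRank_lt : IsLowerSet {x : o.ToType | ordRank x < δ} :=
  fun _ _ hyx hx => (ordRank_le_ordRank.mpr hyx).trans_lt hx

theorem nonempty_ordRank_lt (hδ : IsSuccLimit δ) (hδo : δ ≤ o) :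
    Nonempty {x : o.ToType // ordRank x < δ} :=
  ⟨⟨ToType.mk ⟨0, hδ.pos.trans_le hδo⟩, by rw [ordRank_toTypeMk]; exact hδ.pos⟩⟩

theorem noMaxOrder_ordRank_lt (hδ : IsSuccLimit δ) (hδo : δ ≤ o) :
    NoMaxOrder {x : o.ToType // ordRank x < δ} where
  exists_gt := fun ⟨x, hx⟩ =>
    have hsucc := hδ.succ_lt hx
    ⟨⟨ToType.mk ⟨succ (ordRank x), hsucc.trans_le hδo⟩, by rwa [ordRank_toTypeMk]⟩,
      Subtype.mk_lt_mk.mpr <| ordRank_lt_ordRank.mp <| by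
        rw [ordRank_toTypeMk]; exact lt_succ _⟩

end Ordinal

theorem initialSegment_nicelyEmbedded_general (κ : Cardinal.{u}) (δ lam : Ordinal.{u})
    (hκ : IsMeasurableCardinal κ) (hcof : δ.cof = κ)
    (hlt : δ < lam) :
    NicelyEmbedded
      (OrderEmbedding.subtype (fun x : lam.ToType => ordRank x < δ)) := by
  have hδ : Order.IsSuccLimit δ := Ordinal.one_lt_cof_iff.mp (hcof ▸ one_lt_aleph0.trans hκ.1)
  have := nonempty_ordRank_lt hδ hlt.le
  have := noMaxOrder_ordRank_lt hδ hlt.le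
  apply nicelyEmbedded_of_isLowerSet_range
  rw [OrderEmbedding.coe_subtype, Subtype.range_coe_subtype]
  exact isLowerSet_setOf_ordRank_lt

/-- The order-theoretic step of Theorem 2.8: if `κ` is measurable and
`κ = cf(δ) ≤ δ < λ`, then the linear order `δ`, viewed as the initial segment
`{x ∈ λ : rank x < δ}` of the linear order `λ`, is nicely embedded in `λ`. -/
theorem initialSegment_nicelyEmbedded (κ : Cardinal.{u}) (δ lam : Ordinal.{u})
    (hκ : IsMeasurableCardinal κ) (hcof : δ.cof = κ) (hδ : κ.ord ≤ δ)
    (hlt : δ < lam) :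
    NicelyEmbedded
      (OrderEmbedding.subtype (fun x : lam.ToType => ordRank x < δ)) :=
  initialSegment_nicelyEmbedded_general κ δ lam hκ hcof hlt
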